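/- Assume q is even. The map sending each conic of PG(2,q) whose extension to PG(2,q^3) contains the three points E = (1,τ,τ^2), E^q, E^{q^2} to its nucleus is a bijection onto the set of all q^2+q+1 points of PG(2,q). -/

import Mathlib

/-!
In characteristic `2` the partial derivatives of `Q = c₀x² + c₁y² + c₂z² + c₃xy + c₄xz + c₅yz`
only see the cross terms, so the nucleus of the conic `c` is `(c₅ : c₄ : c₃)`, a linear function
of `c`. Passing through `E` is a `K`-linear condition on `c` with values in `K(τ)`, of dimension
`3`, so the conics through `E` form a subspace of dimension at least `3`; the Frobenius `x ↦ x^q`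
fixes `K` and moves `E` to `E^q` and `E^{q²}`, so these conics are special. On this subspace the
nucleus map is injective: a conic without cross terms is, `K` being perfect, the square of a line
`d₀x + d₁y + d₂z`, and `E` lies on no line of `PG(2,K)` because `1, τ, τ²` are linearly
independent. Hence the nucleus map is an isomorphism from the special conics onto `K³`.
-/

open MvPolynomial

/-- The quadratic form with coefficient vector `c` as a polynomial in three variables. -/
noncomputable def quadForm {R : Type*} [CommRing R] (c : Fin 6 → R) : MvPolynomial (Fin 3) R :=
  C (c 0) * (X 0) ^ 2 + C (c 1) * (X 1) ^ 2 + C (c 2) * (X 2) ^ 2 +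
    C (c 3) * (X 0 * X 1) + C (c 4) * (X 0 * X 2) + C (c 5) * (X 1 * X 2)

/-- `n` is a nucleus of the conic with coefficients `c`: a nonzero point at which all three
formal partial derivatives of the defining quadratic form vanish. -/
def IsNucleus {R : Type*} [CommRing R] (c : Fin 6 → R) (n : Fin 3 → R) : Prop :=
  n ≠ 0 ∧ ∀ i : Fin 3, eval n (pderiv i (quadForm c)) = 0

/-- The conic of `PG(2,q)` with coefficients `c` is special: its extension to `PG(2,q³)`
contains the three points `E`, `E^q`, `E^{q²}`. -/
def IsSpecialConic (K F : Type*) [CommRing K] [CommRing F] [Algebra K F] (q : ℕ) (τ : F)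
    (c : Fin 6 → K) : Prop :=
  eval ![1, τ, τ ^ 2] (quadForm (algebraMap K F ∘ c)) = 0 ∧
  eval ![1, τ ^ q, (τ ^ q) ^ 2] (quadForm (algebraMap K F ∘ c)) = 0 ∧
  eval ![1, τ ^ q ^ 2, (τ ^ q ^ 2) ^ 2] (quadForm (algebraMap K F ∘ c)) = 0

open Matrix

noncomputable def nucleusMap (R : Type*) [CommRing R] : (Fin 6 → R) →ₗ[R] Fin 3 → R :=
  LinearMap.funLeft R R ![5, 4, 3]

section CharTwo

variable {R : Type*} [CommRing R] [CharP R 2]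

lemma eval_pderiv_quadForm (c : Fin 6 → R) (n : Fin 3 → R) (i : Fin 3) :
    eval n (pderiv i (quadForm c)) = (nucleusMap R c ⨯₃ n) i := by
  fin_cases i <;>
  · simp [quadForm, nucleusMap, cross_apply, pderiv_X, CharTwo.sub_eq_add, CharTwo.two_eq_zero,
      add_comm]

lemma isNucleus_iff {c : Fin 6 → R} {n : Fin 3 → R} :
    IsNucleus c n ↔ n ≠ 0 ∧ nucleusMap R c ⨯₃ n = 0 := by
  simp only [IsNucleus, eval_pderiv_quadForm, funext_iff, Pi.zero_apply]

lemma isNucleus_nucleusMap {c : Fin 6 → R} (h : nucleusMap R c ≠ 0) :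
    IsNucleus c (nucleusMap R c) :=
  isNucleus_iff.2 ⟨h, cross_self _⟩

lemma exists_isNucleus [Nontrivial R] (c : Fin 6 → R) : ∃ n, IsNucleus c n := by
  by_cases h : nucleusMap R c = 0
  · refine ⟨Pi.single 0 1, isNucleus_iff.2 ⟨by simp, ?_⟩⟩
    rw [h, map_zero, LinearMap.zero_apply]
  · exact ⟨_, isNucleus_nucleusMap h⟩

lemma IsNucleus.exists_nucleusMap_eq_smul {K : Type*} [Field K] [CharP K 2] {c : Fin 6 → K}
    {n : Fin 3 → K} (h : IsNucleus c n) : ∃ μ : K, nucleusMap K c = μ • n := by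
  obtain ⟨hn, hcross⟩ := isNucleus_iff.1 h
  have : ¬LinearIndependent K ![n, nucleusMap K c] := by
    rw [← crossProduct_ne_zero_iff_linearIndependent, ← cross_anticomm, hcross, neg_zero]
    exact fun h ↦ h rfl
  simpa [LinearIndependent.pair_iff' hn, eq_comm] using this

end CharTwo

noncomputable def quadFormEval (K : Type*) {F : Type*} [CommRing K] [CommRing F] [Algebra K F]
    (x : Fin 3 → F) : (Fin 6 → K) →ₗ[K] F :=
  Fintype.linearCombination K ![x 0 ^ 2, x 1 ^ 2, x 2 ^ 2, x 0 * x 1, x 0 * x 2, x 1 * x 2]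

section QuadFormEval

variable {K F : Type*} [CommRing K] [CommRing F] [Algebra K F]

lemma quadFormEval_apply (x : Fin 3 → F) (c : Fin 6 → K) :
    quadFormEval K x c = eval x (quadForm (algebraMap K F ∘ c)) := by
  simp [quadFormEval, Fintype.linearCombination_apply, Fin.sum_univ_succ, quadForm,
    Algebra.smul_def, add_assoc]

lemma quadFormEval_algHom (σ : F →ₐ[K] F) (x : Fin 3 → F) (c : Fin 6 → K) :
    quadFormEval K (σ ∘ x) c = σ (quadFormEval K x c) := by
  simp [quadFormEval, Fintype.linearCombination_apply, Fin.sum_univ_succ]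

end QuadFormEval

lemma isSpecialConic_iff {K F : Type*} [Field K] [Fintype K] [CommRing F] [Algebra K F] {τ : F}
    {c : Fin 6 → K} :
    IsSpecialConic K F (Fintype.card K) τ c ↔ quadFormEval K ![1, τ, τ ^ 2] c = 0 := by
  have hσ (y : F) : FiniteField.frobeniusAlgHom K F ∘ ![1, y, y ^ 2] =
      ![1, y ^ Fintype.card K, (y ^ Fintype.card K) ^ 2] := by
    ext i; fin_cases i <;> simp [← pow_mul, mul_comm]
  have hq2 : τ ^ Fintype.card K ^ 2 = (τ ^ Fintype.card K) ^ Fintype.card K := by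
    rw [← pow_mul, sq]
  simp only [IsSpecialConic, ← quadFormEval_apply, hq2, ← hσ, quadFormEval_algHom]
  exact ⟨fun h ↦ h.1, fun h ↦ by simp [h]⟩

lemma linearIndependent_one_self_sq {K F : Type*} [Field K] [CommRing F] [Algebra K F] {τ : F}
    (hτ : (minpoly K τ).natDegree = 3) : LinearIndependent K ![1, τ, τ ^ 2] := by
  have h := linearIndependent_pow (K := K) τ
  rw [hτ] at h
  convert h using 1
  ext i; fin_cases i <;> simp

section SpecialConics

variable {K F : Type*} [Field K] [Field F] [Algebra K F] {τ : F}

open IntermediateField Module LinearMap in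
lemma le_finrank_ker_quadFormEval (hτ : (minpoly K τ).natDegree = 3) :
    3 ≤ finrank K (ker (quadFormEval K ![1, τ, τ ^ 2])) := by
  have hint : IsIntegral K τ := by
    by_contra h
    simp [minpoly.eq_zero h] at hτ
  have := adjoin.finiteDimensional hint
  have hrange : range (quadFormEval K ![1, τ, τ ^ 2]) ≤ K⟮τ⟯.toSubalgebra.toSubmodule := by
    have hτ' : τ ∈ K⟮τ⟯ := mem_adjoin_simple_self K τ
    rw [quadFormEval, Fintype.range_linearCombination, Submodule.span_le]
    rintro _ ⟨i, rfl⟩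
    fin_cases i <;> simp [hτ', pow_mem, mul_mem]
  have hle := Submodule.finrank_mono hrange
  have := finrank_range_add_finrank_ker (quadFormEval K ![1, τ, τ ^ 2])
  rw [finrank_fin_fun] at this
  have h3 : finrank K K⟮τ⟯.toSubalgebra.toSubmodule = 3 := adjoin.finrank hint ▸ hτ ▸ rfl
  omega

variable [CharP K 2] [PerfectRing K 2]

lemma eq_zero_of_quadFormEval_eq_zero_of_nucleusMap_eq_zero (hτ : (minpoly K τ).natDegree = 3)
    {c : Fin 6 → K} (hE : quadFormEval K ![1, τ, τ ^ 2] c = 0) (hN : nucleusMap K c = 0) :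
    c = 0 := by
  have : CharP F 2 := charP_of_injective_algebraMap' K 2
  have h3 : c 3 = 0 := by simpa [nucleusMap] using congrFun hN 2
  have h4 : c 4 = 0 := by simpa [nucleusMap] using congrFun hN 1
  have h5 : c 5 = 0 := by simpa [nucleusMap] using congrFun hN 0
  obtain ⟨d₀, hd₀⟩ := surjective_frobenius K 2 (c 0)
  obtain ⟨d₁, hd₁⟩ := surjective_frobenius K 2 (c 1)
  obtain ⟨d₂, hd₂⟩ := surjective_frobenius K 2 (c 2)
  have hsq : quadFormEval K ![1, τ, τ ^ 2] c =
      (algebraMap K F d₀ + algebraMap K F d₁ * τ + algebraMap K F d₂ * τ ^ 2) ^ 2 := by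
    simp only [quadFormEval, Fintype.linearCombination_apply, Fin.sum_univ_succ]
    simp [← hd₀, ← hd₁, ← hd₂, h3, h4, h5, frobenius_def, Algebra.smul_def]
    linear_combination -(algebraMap K F d₀ * algebraMap K F d₁ * τ +
      algebraMap K F d₀ * algebraMap K F d₂ * τ ^ 2 +
      algebraMap K F d₁ * algebraMap K F d₂ * τ ^ 3) * CharTwo.two_eq_zero (R := F)
  rw [hsq, sq_eq_zero_iff] at hE
  have hsum : ∑ i, ![d₀, d₁, d₂] i • ![(1 : F), τ, τ ^ 2] i = 0 := by
    simpa [Fin.sum_univ_three, Algebra.smul_def] using hE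
  have hli : LinearIndependent K ![(1 : F), τ, τ ^ 2] := linearIndependent_one_self_sq hτ
  have hd := Fintype.linearIndependent_iff.1 hli _ hsum
  obtain ⟨rfl, rfl, rfl⟩ : d₀ = 0 ∧ d₁ = 0 ∧ d₂ = 0 := ⟨hd 0, hd 1, hd 2⟩
  ext i
  fin_cases i <;> simp [← hd₀, ← hd₁, ← hd₂, h3, h4, h5]

open Module LinearMap in
lemma exists_mem_ker_quadFormEval_nucleusMap_eq (hτ : (minpoly K τ).natDegree = 3)
    (v : Fin 3 → K) : ∃ c ∈ ker (quadFormEval K ![1, τ, τ ^ 2]), nucleusMap K c = v := by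
  set f := (nucleusMap K).domRestrict (ker (quadFormEval K ![1, τ, τ ^ 2]))
  have hf : Function.Injective f := by
    refine (injective_iff_map_eq_zero f).2 fun c hc ↦ Subtype.ext ?_
    exact eq_zero_of_quadFormEval_eq_zero_of_nucleusMap_eq_zero hτ c.2 hc
  have hdim : finrank K (ker (quadFormEval K ![1, τ, τ ^ 2])) = finrank K (Fin 3 → K) := by
    have := finrank_le_finrank_of_injective hf
    have := le_finrank_ker_quadFormEval hτ
    rw [finrank_fin_fun] at *
    omega
  obtain ⟨c, hc⟩ := (injective_iff_surjective_of_finrank_eq_finrank hdim).1 hf v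
  exact ⟨c, c.2, hc⟩

lemma exists_quadFormEval_eq_zero_isNucleus (hτ : (minpoly K τ).natDegree = 3) {n : Fin 3 → K}
    (hn : n ≠ 0) : ∃ c, c ≠ 0 ∧ quadFormEval K ![1, τ, τ ^ 2] c = 0 ∧ IsNucleus c n := by
  obtain ⟨c, hc, rfl⟩ := exists_mem_ker_quadFormEval_nucleusMap_eq hτ n
  exact ⟨c, fun h ↦ hn (by rw [h, map_zero]), hc, isNucleus_nucleusMap hn⟩

lemma exists_eq_smul_of_isNucleus (hτ : (minpoly K τ).natDegree = 3) {c c' : Fin 6 → K}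
    {n : Fin 3 → K} {lam : K} (hc : c ≠ 0) (hc' : c' ≠ 0)
    (hE : quadFormEval K ![1, τ, τ ^ 2] c = 0) (hE' : quadFormEval K ![1, τ, τ ^ 2] c' = 0)
    (hn : IsNucleus c n) (hn' : IsNucleus c' (lam • n)) : ∃ μ : K, μ ≠ 0 ∧ c' = μ • c := by
  obtain ⟨ν, hν⟩ := hn.exists_nucleusMap_eq_smul
  obtain ⟨ν', hν'⟩ := hn'.exists_nucleusMap_eq_smul
  have hν0 : ν ≠ 0 := by
    rintro rfl
    exact hc (eq_zero_of_quadFormEval_eq_zero_of_nucleusMap_eq_zero hτ hE (by simp [hν]))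
  have hμ : c' = (ν' * lam / ν) • c := by
    rw [← sub_eq_zero]
    refine eq_zero_of_quadFormEval_eq_zero_of_nucleusMap_eq_zero hτ (by simp [hE, hE']) ?_
    rw [map_sub, map_smul, hν, hν', smul_smul, smul_smul, div_mul_cancel₀ _ hν0, sub_self]
  refine ⟨_, fun h ↦ hc' ?_, hμ⟩
  rw [hμ, h, zero_smul]

end SpecialConics

theorem stmt_13_general (q : ℕ) (heven : Even q) (K F : Type*) [Field K] [Field F]
    [Algebra K F] [Fintype K]
    (hK : Fintype.card K = q)
    (τ : F) (hτ : (minpoly K τ).natDegree = 3) :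
    (∀ c : Fin 6 → K, c ≠ 0 → IsSpecialConic K F q τ c → ∃ n : Fin 3 → K, IsNucleus c n) ∧
    (∀ n : Fin 3 → K, n ≠ 0 →
      ∃ c : Fin 6 → K, c ≠ 0 ∧ IsSpecialConic K F q τ c ∧ IsNucleus c n) ∧
    (∀ c c' : Fin 6 → K, ∀ n n' : Fin 3 → K, c ≠ 0 → c' ≠ 0 →
      IsSpecialConic K F q τ c → IsSpecialConic K F q τ c' →
      IsNucleus c n → IsNucleus c' n' →
      (∃ lam : K, lam ≠ 0 ∧ n' = lam • n) →
      ∃ μ : K, μ ≠ 0 ∧ c' = μ • c) := by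
  subst hK
  have : CharP K 2 := ringChar.of_eq (FiniteField.even_card_iff_char_two.2 (Nat.even_iff.1 heven))
  refine ⟨fun c _ _ ↦ exists_isNucleus c, fun n hn ↦ ?_, ?_⟩
  · obtain ⟨c, hc, hE, hcn⟩ := exists_quadFormEval_eq_zero_isNucleus hτ hn
    exact ⟨c, hc, isSpecialConic_iff.2 hE, hcn⟩
  · rintro c c' n _ hc hc' hsp hsp' hn hn' ⟨lam, -, rfl⟩
    exact exists_eq_smul_of_isNucleus hτ hc hc' (isSpecialConic_iff.1 hsp)
      (isSpecialConic_iff.1 hsp') hn hn'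

theorem stmt_13 (q : ℕ) (hq : IsPrimePow q) (heven : Even q) (K F : Type*) [Field K] [Field F]
    [Algebra K F] [Fintype K] [Fintype F]
    (hK : Fintype.card K = q) (hF : Fintype.card F = q ^ 3)
    (τ : F) (hτ : (minpoly K τ).natDegree = 3) :
    (∀ c : Fin 6 → K, c ≠ 0 → IsSpecialConic K F q τ c → ∃ n : Fin 3 → K, IsNucleus c n) ∧
    (∀ n : Fin 3 → K, n ≠ 0 →
      ∃ c : Fin 6 → K, c ≠ 0 ∧ IsSpecialConic K F q τ c ∧ IsNucleus c n) ∧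
    (∀ c c' : Fin 6 → K, ∀ n n' : Fin 3 → K, c ≠ 0 → c' ≠ 0 →
      IsSpecialConic K F q τ c → IsSpecialConic K F q τ c' →
      IsNucleus c n → IsNucleus c' n' →
      (∃ lam : K, lam ≠ 0 ∧ n' = lam • n) →
      ∃ μ : K, μ ≠ 0 ∧ c' = μ • c) :=
  stmt_13_general q heven K F hK τ hτ
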